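/- arXiv:math/0502024 — 5 statements merged into one kernel-verified Lean document; each statement's English description precedes it below -/
import Mathlib

section
/- If x ∈ Δⁿ satisfies ⟨a|x⟩ - σ(x) = -log Z with Z = ∑_i exp(-a_i), then x = y where y_i = exp(-a_i)/Z. That is, the Gibbs state is the unique minimizer of the free energy functional on Δⁿ. -/
open Real Finset

theorem gibbs_unique_minimizer (n : ℕ) (hn : 2 ≤ n) (a : Fin n → ℝ)
    (x : Fin n → ℝ) (hx0 : ∀ i, 0 ≤ x i) (hx1 : ∀ i, x i ≤ 1)
    (hxsum : ∑ i, x i = 1)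
    (hmin : (∑ i, a i * x i) - (-∑ i, x i * Real.log (x i)) =
      -Real.log (∑ i, Real.exp (-(a i)))) :
    x = fun i => Real.exp (-(a i)) / (∑ j, Real.exp (-(a j))) := by
  haveI : NeZero n := ⟨by omega⟩
  set Z : ℝ := ∑ j, Real.exp (-(a j)) with hZdef
  have hZ : 0 < Z := Finset.sum_pos (fun i _ => Real.exp_pos _) Finset.univ_nonempty
  set y : Fin n → ℝ := fun i => Real.exp (-(a i)) / Z with hy
  have hy0 : ∀ i, 0 < y i := fun i => div_pos (Real.exp_pos _) hZ
  have hysum : ∑ i, y i = 1 := by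
    simp only [hy, ← Finset.sum_div]
    exact div_self hZ.ne'
  have hlogy : ∀ i, Real.log (y i) = -(a i) - Real.log Z := by
    intro i
    simp only [hy]
    rw [Real.log_div (Real.exp_ne_zero _) hZ.ne', Real.log_exp]
  set f : Fin n → ℝ :=
    fun i => x i * Real.log (x i) - x i * Real.log (y i) - (x i - y i) with hf
  have h1 : ∑ i, x i * Real.log (y i) = -(∑ i, a i * x i) - Real.log Z := by
    have h2 : ∀ i ∈ Finset.univ,
        x i * Real.log (y i) = -(a i * x i) - Real.log Z * x i := by
      intro i _; rw [hlogy i]; ring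
    rw [Finset.sum_congr rfl h2, Finset.sum_sub_distrib, ← Finset.mul_sum, hxsum,
      Finset.sum_neg_distrib]
    ring
  have hfsum : ∑ i, f i = 0 := by
    simp only [hf]
    rw [Finset.sum_sub_distrib, Finset.sum_sub_distrib, h1, Finset.sum_sub_distrib,
      hxsum, hysum]
    linarith [hmin]
  have key : ∀ i, 0 ≤ f i ∧ (f i = 0 → x i = y i) := by
    intro i
    rcases eq_or_lt_of_le (hx0 i) with h | h
    · have hfi : f i = y i := by simp [hf, ← h]
      exact ⟨by rw [hfi]; exact (hy0 i).le,
        fun h0 => absurd (hfi ▸ h0) (hy0 i).ne'⟩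
    · have hld : Real.log (y i / x i) = Real.log (y i) - Real.log (x i) :=
        Real.log_div (hy0 i).ne' h.ne'
      have hx : x i * (y i / x i - 1) = y i - x i := by field_simp
      constructor
      · have hlog := Real.log_le_sub_one_of_pos (div_pos (hy0 i) h)
        have hm := mul_le_mul_of_nonneg_left hlog h.le
        rw [hld] at hm
        simp only [hf]
        nlinarith
      · intro hfi
        by_contra hne
        have hne1 : y i / x i ≠ 1 := by
          intro h1
          exact hne ((div_eq_one_iff_eq h.ne').mp h1).symm
        have hlt := Real.log_lt_sub_one_of_pos (div_pos (hy0 i) h) hne1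
        rw [hld] at hlt
        have hm := mul_lt_mul_of_pos_left hlt h
        simp only [hf] at hfi
        nlinarith
  have hall : ∀ i ∈ Finset.univ, f i = 0 :=
    (Finset.sum_eq_zero_iff_of_nonneg (fun i _ => (key i).1)).mp hfsum
  funext i
  exact (key i).2 (hall i (Finset.mem_univ i))
end

section
/- Let a : Fin n → ℝ be strictly increasing with a_1 < E < a_n. There exists λ ∈ ℝ such that E·∑_i exp(λ a_i) = ∑_i a_i exp(λ a_i). -/
open Finset Filter

lemma aux_tendsto (n : ℕ) (a : Fin n → ℝ) (E : ℝ) (k : Fin n) (l : Filter ℝ)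
    (h : ∀ i, i ≠ k → Tendsto (fun x => x * (a i - a k)) l atBot) :
    Tendsto (fun x => ∑ i, (a i - E) * Real.exp (x * (a i - a k))) l (nhds (a k - E)) := by
  have hsum : (a k - E) = ∑ i : Fin n, if i = k then a k - E else 0 := by simp
  rw [hsum]
  apply tendsto_finset_sum
  intro i _
  by_cases hi : i = k
  · subst hi
    simpa using (tendsto_const_nhds : Tendsto (fun _ : ℝ => a i - E) l _)
  · simp only [hi, if_false]
    have h0 : Tendsto (fun x => Real.exp (x * (a i - a k))) l (nhds 0) :=
      Real.tendsto_exp_atBot.comp (h i hi)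
    simpa using tendsto_const_nhds.mul h0

lemma aux_factor (n : ℕ) (a : Fin n → ℝ) (E : ℝ) (k : Fin n) (x : ℝ) :
    ∑ i, (a i - E) * Real.exp (x * a i)
      = Real.exp (x * a k) * ∑ i, (a i - E) * Real.exp (x * (a i - a k)) := by
  rw [Finset.mul_sum]
  apply Finset.sum_congr rfl
  intro i _
  rw [show Real.exp (x * a k) * ((a i - E) * Real.exp (x * (a i - a k)))
      = (a i - E) * (Real.exp (x * a k) * Real.exp (x * (a i - a k))) by ring,
    ← Real.exp_add]
  ring_nf

theorem lagrange_multiplier_exists (n : ℕ) (hn : 2 ≤ n) (a : Fin n → ℝ)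
    (ha : StrictMono a) (E : ℝ)
    (hE1 : a ⟨0, by omega⟩ < E) (hE2 : E < a ⟨n - 1, by omega⟩) :
    ∃ lam : ℝ, E * ∑ i, Real.exp (lam * a i) = ∑ i, a i * Real.exp (lam * a i) := by
  set g : ℝ → ℝ := fun x => ∑ i, (a i - E) * Real.exp (x * a i) with hg
  have hgcont : Continuous g := by
    apply continuous_finset_sum
    intro i _
    exact continuous_const.mul (Real.continuous_exp.comp (continuous_id.mul continuous_const))
  set k0 : Fin n := ⟨0, by omega⟩
  set k1 : Fin n := ⟨n - 1, by omega⟩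
  -- eventually positive at +∞
  have htop : Tendsto (fun x => ∑ i, (a i - E) * Real.exp (x * (a i - a k1))) atTop
      (nhds (a k1 - E)) := by
    apply aux_tendsto
    intro i hi
    have hlt : a i < a k1 := by
      apply ha
      have h1 := i.isLt
      have h2 : (i : ℕ) ≠ n - 1 := fun h => hi (Fin.ext h)
      simp only [Fin.lt_def, k1]
      omega
    exact tendsto_id.atTop_mul_const_of_neg (by linarith)
  have hbot : Tendsto (fun x => ∑ i, (a i - E) * Real.exp (x * (a i - a k0))) atBot
      (nhds (a k0 - E)) := by
    apply aux_tendsto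
    intro i hi
    have hlt : a k0 < a i := by
      apply ha
      have h2 : (i : ℕ) ≠ 0 := fun h => hi (Fin.ext h)
      simp only [Fin.lt_def, k0]
      omega
    exact tendsto_id.atBot_mul_const (by linarith)
  obtain ⟨x1, hx1⟩ := (htop.eventually (eventually_gt_nhds (by linarith : (0:ℝ) < a k1 - E))).exists
  obtain ⟨x0, hx0⟩ := (hbot.eventually (eventually_lt_nhds (by linarith : a k0 - E < (0:ℝ)))).exists
  have hg1 : 0 < g x1 := by
    rw [hg]; dsimp only
    rw [aux_factor n a E k1 x1]
    positivity
  have hg0 : g x0 < 0 := by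
    rw [hg]; dsimp only
    rw [aux_factor n a E k0 x0]
    exact mul_neg_of_pos_of_neg (Real.exp_pos _) hx0
  have h0mem : (0:ℝ) ∈ Set.uIcc (g x0) (g x1) := by
    rw [Set.mem_uIcc]
    left; exact ⟨le_of_lt hg0, le_of_lt hg1⟩
  obtain ⟨lam, _, hlam⟩ := intermediate_value_uIcc (hgcont.continuousOn) h0mem
  refine ⟨lam, ?_⟩
  have : ∑ i, (a i - E) * Real.exp (lam * a i)
      = ∑ i, a i * Real.exp (lam * a i) - E * ∑ i, Real.exp (lam * a i) := by
    rw [Finset.mul_sum, ← Finset.sum_sub_distrib]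
    apply Finset.sum_congr rfl
    intro i _
    ring
  have hz : g lam = 0 := hlam
  rw [hg] at hz
  dsimp only at hz
  linarith [this ▸ hz]
end

section
/- Let a : Fin n → ℝ be strictly increasing. If λ, β ∈ ℝ both satisfy E·∑_i exp(μ a_i) = ∑_i a_i exp(μ a_i) (for μ = λ and μ = β), then λ = β. -/
open Finset

lemma term_nonpos_aux (lam beta x y : ℝ) (h : lam < beta) :
    (x - y) * (Real.exp (lam*x) * Real.exp (beta*y) - Real.exp (lam*y) * Real.exp (beta*x)) ≤ 0 := by
  rcases lt_trichotomy x y with hxy | rfl | hxy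
  · apply le_of_lt
    apply mul_neg_of_neg_of_pos (by linarith)
    rw [← Real.exp_add, ← Real.exp_add, sub_pos, Real.exp_lt_exp]
    nlinarith
  · simp
  · apply le_of_lt
    apply mul_neg_of_pos_of_neg (by linarith)
    rw [← Real.exp_add, ← Real.exp_add, sub_neg, Real.exp_lt_exp]
    nlinarith

lemma term_neg_aux (lam beta x y : ℝ) (h : lam < beta) (hxy : x < y) :
    (x - y) * (Real.exp (lam*x) * Real.exp (beta*y) - Real.exp (lam*y) * Real.exp (beta*x)) < 0 := by
  apply mul_neg_of_neg_of_pos (by linarith)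
  rw [← Real.exp_add, ← Real.exp_add, sub_pos, Real.exp_lt_exp]
  nlinarith

lemma lagrange_aux (n : ℕ) (hn : 2 ≤ n) (a : Fin n → ℝ)
    (ha : StrictMono a) (E : ℝ) (lam beta : ℝ) (hlt : lam < beta)
    (hlam : E * ∑ i, Real.exp (lam * a i) = ∑ i, a i * Real.exp (lam * a i))
    (hbeta : E * ∑ i, Real.exp (beta * a i) = ∑ i, a i * Real.exp (beta * a i)) :
    False := by
  set S : ℝ := ∑ i, ∑ j, (a i - a j) * Real.exp (lam * a i) * Real.exp (beta * a j) with hS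
  have h1 : S = (∑ i, a i * Real.exp (lam * a i)) * (∑ j, Real.exp (beta * a j))
      - (∑ i, Real.exp (lam * a i)) * (∑ j, a j * Real.exp (beta * a j)) := by
    rw [hS, Finset.sum_mul, Finset.sum_mul, ← Finset.sum_sub_distrib]
    refine Finset.sum_congr rfl fun i _ => ?_
    rw [Finset.mul_sum, Finset.mul_sum, ← Finset.sum_sub_distrib]
    exact Finset.sum_congr rfl fun j _ => by ring
  have hS0 : S = 0 := by
    rw [h1, ← hlam, ← hbeta]; ring
  have h2 : ∑ i, ∑ j, (a i - a j) *
      (Real.exp (lam * a i) * Real.exp (beta * a j) - Real.exp (lam * a j) * Real.exp (beta * a i))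
      = 2 * S := by
    have hB : ∑ i, ∑ j, (a i - a j) * (Real.exp (lam * a j) * Real.exp (beta * a i)) = -S := by
      rw [Finset.sum_comm, hS, ← Finset.sum_neg_distrib]
      refine Finset.sum_congr rfl fun i _ => ?_
      rw [← Finset.sum_neg_distrib]
      exact Finset.sum_congr rfl fun j _ => by ring
    have hA : ∑ i, ∑ j, (a i - a j) *
        (Real.exp (lam * a i) * Real.exp (beta * a j) - Real.exp (lam * a j) * Real.exp (beta * a i))
        = S - ∑ i, ∑ j, (a i - a j) * (Real.exp (lam * a j) * Real.exp (beta * a i)) := by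
      rw [hS, ← Finset.sum_sub_distrib]
      refine Finset.sum_congr rfl fun i _ => ?_
      rw [← Finset.sum_sub_distrib]
      exact Finset.sum_congr rfl fun j _ => by ring
    rw [hA, hB]; ring
  have hneg : ∑ i, ∑ j, (a i - a j) *
      (Real.exp (lam * a i) * Real.exp (beta * a j) - Real.exp (lam * a j) * Real.exp (beta * a i))
      < 0 := by
    rw [← Finset.sum_product']
    have := Finset.sum_lt_sum (s := (Finset.univ ×ˢ Finset.univ : Finset (Fin n × Fin n)))
      (f := fun p : Fin n × Fin n => (a p.1 - a p.2) *
        (Real.exp (lam * a p.1) * Real.exp (beta * a p.2)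
          - Real.exp (lam * a p.2) * Real.exp (beta * a p.1)))
      (g := fun _ => (0 : ℝ))
      (fun p _ => term_nonpos_aux lam beta (a p.1) (a p.2) hlt)
      ⟨(⟨0, by omega⟩, ⟨1, by omega⟩), by simp, by
        exact term_neg_aux lam beta _ _ hlt (ha (by simp [Fin.lt_def]))⟩
    simpa using this
  rw [h2, hS0] at hneg
  norm_num at hneg

theorem lagrange_multiplier_unique (n : ℕ) (hn : 2 ≤ n) (a : Fin n → ℝ)
    (ha : StrictMono a) (E : ℝ) (lam beta : ℝ)
    (hlam : E * ∑ i, Real.exp (lam * a i) = ∑ i, a i * Real.exp (lam * a i))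
    (hbeta : E * ∑ i, Real.exp (beta * a i) = ∑ i, a i * Real.exp (beta * a i)) :
    lam = beta := by
  rcases lt_trichotomy lam beta with h | h | h
  · exact absurd (lagrange_aux n hn a ha E lam beta h hlam hbeta) (by simp)
  · exact h
  · exact absurd (lagrange_aux n hn a ha E beta lam h hbeta hlam) (by simp)
end

section
/- Let a : Fin n → ℝ be strictly increasing and suppose λ ∈ ℝ satisfies E·∑_i exp(λ a_i) = ∑_i a_i exp(λ a_i). Then the state y with y_i = exp(λ a_i)/∑_j exp(λ a_j) satisfies ⟨a|y⟩ = E and σ(y) ≥ σ(x) for every x ∈ Δⁿ with ⟨a|x⟩ = E. -/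
open Finset Real

/-!
The Gibbs state `g = exp b / Z` with `Z = ∑ exp b` has `log g = b - log Z`, so for every
probability vector `x` the cross entropy `-∑ x log g = log Z - ⟨b|x⟩` depends on `x` only
through `⟨b|x⟩`. Gibbs' inequality `-∑ x log x ≤ -∑ x log g` then gives the variational
principle `σ(x) + ⟨b|x⟩ ≤ log Z = σ(g) + ⟨b|g⟩`. With `b = λa` the constraint `⟨a|x⟩ = E`
fixes `⟨b|x⟩`, and the multiplier equation says exactly that `⟨a|g⟩ = E`.
-/

lemma mul_log_sub_mul_log_le_sub {x y : ℝ} (hx : 0 ≤ x) (hy : 0 < y) :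
    x * log y - x * log x ≤ y - x := by
  rcases hx.eq_or_lt with rfl | hx
  · simpa using hy.le
  calc x * log y - x * log x = x * log (y / x) := by rw [log_div hy.ne' hx.ne']; ring
    _ ≤ x * (y / x - 1) := mul_le_mul_of_nonneg_left (log_le_sub_one_of_pos (div_pos hy hx)) hx.le
    _ = y - x := by field_simp

section Gibbs

variable {ι : Type*} [Fintype ι]

theorem sum_mul_log_le_sum_mul_log {x y : ι → ℝ} (hx : ∀ i, 0 ≤ x i) (hy : ∀ i, 0 < y i)
    (hxy : ∑ i, x i = ∑ i, y i) :
    ∑ i, x i * log (y i) ≤ ∑ i, x i * log (x i) := by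
  have : ∑ i, (x i * log (y i) - x i * log (x i)) ≤ ∑ i, (y i - x i) :=
    sum_le_sum fun i _ => mul_log_sub_mul_log_le_sub (hx i) (hy i)
  rw [sum_sub_distrib, sum_sub_distrib, hxy, sub_self] at this
  linarith

noncomputable def gibbsState (b : ι → ℝ) : ι → ℝ := fun i => exp (b i) / ∑ j, exp (b j)

variable [Nonempty ι] (b : ι → ℝ)

lemma sum_exp_pos : 0 < ∑ j, exp (b j) :=
  sum_pos (fun j _ => exp_pos (b j)) univ_nonempty

lemma gibbsState_pos (i : ι) : 0 < gibbsState b i :=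
  div_pos (exp_pos _) (sum_exp_pos b)

lemma sum_gibbsState : ∑ i, gibbsState b i = 1 := by
  simp only [gibbsState, ← sum_div, div_self (sum_exp_pos b).ne']

lemma log_gibbsState (i : ι) : log (gibbsState b i) = b i - log (∑ j, exp (b j)) := by
  rw [gibbsState, log_div (exp_ne_zero _) (sum_exp_pos b).ne', log_exp]

lemma sum_mul_log_gibbsState {x : ι → ℝ} (hx : ∑ i, x i = 1) :
    ∑ i, x i * log (gibbsState b i) = ∑ i, b i * x i - log (∑ j, exp (b j)) := by
  simp only [log_gibbsState, mul_sub, sum_sub_distrib, ← sum_mul, hx, one_mul, mul_comm]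

lemma neg_sum_mul_log_gibbsState :
    -∑ i, gibbsState b i * log (gibbsState b i) =
      log (∑ j, exp (b j)) - ∑ i, b i * gibbsState b i := by
  rw [sum_mul_log_gibbsState b (sum_gibbsState b)]
  ring

theorem neg_sum_mul_log_le_log_sum_exp_sub {x : ι → ℝ} (hx0 : ∀ i, 0 ≤ x i)
    (hx1 : ∑ i, x i = 1) :
    -∑ i, x i * log (x i) ≤ log (∑ j, exp (b j)) - ∑ i, b i * x i := by
  have := sum_mul_log_le_sum_mul_log hx0 (gibbsState_pos b) (by rw [hx1, sum_gibbsState])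
  rw [sum_mul_log_gibbsState b hx1] at this
  linarith

theorem neg_sum_mul_log_add_le_gibbsState {x : ι → ℝ} (hx0 : ∀ i, 0 ≤ x i)
    (hx1 : ∑ i, x i = 1) :
    -∑ i, x i * log (x i) + ∑ i, b i * x i ≤
      -∑ i, gibbsState b i * log (gibbsState b i) + ∑ i, b i * gibbsState b i := by
  have := neg_sum_mul_log_le_log_sum_exp_sub b hx0 hx1
  rw [neg_sum_mul_log_gibbsState]
  linarith

end Gibbs

theorem maxent_state_from_multiplier_general (n : ℕ) (hn : 2 ≤ n) (a : Fin n → ℝ)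
    (E : ℝ) (lam : ℝ)
    (hlam : E * ∑ i, Real.exp (lam * a i) = ∑ i, a i * Real.exp (lam * a i)) :
    let y : Fin n → ℝ := fun i => Real.exp (lam * a i) / (∑ j, Real.exp (lam * a j))
    (∑ i, a i * y i = E) ∧
      ∀ x : Fin n → ℝ, (∀ i, 0 ≤ x i) → (∀ i, x i ≤ 1) → (∑ i, x i = 1) →
        (∑ i, a i * x i = E) →
        (-∑ i, x i * Real.log (x i)) ≤ (-∑ i, y i * Real.log (y i)) := by
  intro y
  have : Nonempty (Fin n) := ⟨⟨0, by omega⟩⟩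
  have hy : y = gibbsState (fun i => lam * a i) := rfl
  have hay : ∑ i, a i * y i = E := by
    simp only [y, mul_div_assoc', ← sum_div, ← hlam]
    exact mul_div_cancel_right₀ E (sum_exp_pos _).ne'
  have pairing (z : Fin n → ℝ) : ∑ i, lam * a i * z i = lam * ∑ i, a i * z i := by
    simp only [mul_sum, mul_assoc]
  refine ⟨hay, fun x hx0 _ hx1 hxE => ?_⟩
  have := neg_sum_mul_log_add_le_gibbsState (fun i => lam * a i) hx0 hx1
  rw [← hy, pairing, pairing, hay, hxE] at this
  linarith

theorem maxent_state_from_multiplier (n : ℕ) (hn : 2 ≤ n) (a : Fin n → ℝ)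
    (ha : StrictMono a) (E : ℝ) (lam : ℝ)
    (hlam : E * ∑ i, Real.exp (lam * a i) = ∑ i, a i * Real.exp (lam * a i)) :
    let y : Fin n → ℝ := fun i => Real.exp (lam * a i) / (∑ j, Real.exp (lam * a j))
    (∑ i, a i * y i = E) ∧
      ∀ x : Fin n → ℝ, (∀ i, 0 ≤ x i) → (∀ i, x i ≤ 1) → (∑ i, x i = 1) →
        (∑ i, a i * x i = E) →
        (-∑ i, x i * Real.log (x i)) ≤ (-∑ i, y i * Real.log (y i)) :=
  maxent_state_from_multiplier_general n hn a E lam hlam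
end

section
/- Let λ > 0 and define Λ : Δⁿ → ℝ ∪ {∞} by Λ(x) = log(s_1/s_2)/(a_n - a_{n-1}) where s = sort(x) is x sorted in decreasing order (Λ(x) = ∞ for pure states). If x ⊑ y in the Bayesian order on Δⁿ, then Λ(x) ≤ Λ(y). -/
open Finset

/-- `x ⊑ y` in the Bayesian order on `Δⁿ`: there is a permutation simultaneously
sorting `x` and `y` into decreasing order and satisfying the cross-ratio inequalities. -/
def BayesLE {n : ℕ} (x y : Fin (n + 2) → ℝ) : Prop :=
  ∃ σ : Equiv.Perm (Fin (n + 2)),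
    Antitone (x ∘ σ) ∧ Antitone (y ∘ σ) ∧
      ∀ i : Fin (n + 1),
        x (σ i.castSucc) * y (σ i.succ) ≤ x (σ i.succ) * y (σ i.castSucc)

/-- The map `Λ` sending a state to `log(s₁/s₂)/(aₙ - aₙ₋₁)` where `s` is the
decreasing sort of the state, with value `⊤` on pure states. -/
noncomputable def LambdaMap {n : ℕ} (a : Fin (n + 2) → ℝ) (x : Fin (n + 2) → ℝ) : EReal :=
  if ∃ i, x i = 1 then ⊤
  else
    let σ := Tuple.sort (fun i => -x i)
    ((Real.log (x (σ ⟨0, by omega⟩) / x (σ ⟨1, by omega⟩)) /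
        (a ⟨n + 1, by omega⟩ - a ⟨n, by omega⟩) : ℝ) : EReal)

/-- An antitone rearrangement agrees with the canonical sort of the negation. -/
lemma comp_eq_sortNeg {m : ℕ} (x : Fin m → ℝ) (σ : Equiv.Perm (Fin m))
    (h : Antitone (x ∘ σ)) (i : Fin m) :
    x (σ i) = x (Tuple.sort (fun j => -x j) i) := by
  have hm : Monotone ((fun j => -x j) ∘ σ) := fun a b hab => neg_le_neg (h hab)
  have he := Tuple.comp_sort_eq_comp_iff_monotone.mpr hm
  have := congrFun he i
  simpa [neg_inj] using this

lemma sorted_facts {n : ℕ} (x : Fin (n + 2) → ℝ) (σ : Equiv.Perm (Fin (n + 2)))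
    (hxa : Antitone (x ∘ σ)) (hx0 : ∀ i, 0 ≤ x i) (hxsum : ∑ i, x i = 1) :
    0 < x (σ 0) ∧ (x (σ 1) = 0 → x (σ 0) = 1) := by
  have hs : ∑ i, x (σ i) = 1 := by
    rw [Equiv.sum_comp σ x]; exact hxsum
  constructor
  · by_contra hle
    push_neg at hle
    have : ∑ i, x (σ i) ≤ 0 := by
      apply Finset.sum_nonpos
      intro i _
      exact le_trans (hxa (Fin.zero_le i)) hle
    linarith [hs]
  · intro h1
    have hzero : ∀ i : Fin (n + 1), x (σ i.succ) = 0 := by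
      intro i
      have h1le : (1 : Fin (n + 2)) ≤ i.succ := by
        rw [← Fin.succ_zero_eq_one]
        exact Fin.succ_le_succ_iff.mpr (Fin.zero_le i)
      have := hxa h1le
      simp only [Function.comp_apply] at this
      exact le_antisymm (h1 ▸ this) (hx0 _)
    rw [Fin.sum_univ_succ] at hs
    simpa [hzero] using hs

theorem LambdaMap_monotone (n : ℕ) (a : Fin (n + 2) → ℝ) (ha : StrictMono a)
    (E lam : ℝ) (hlam0 : 0 < lam)
    (hlam : E * ∑ i, Real.exp (lam * a i) = ∑ i, a i * Real.exp (lam * a i))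
    (x y : Fin (n + 2) → ℝ)
    (hx0 : ∀ i, 0 ≤ x i) (hx1 : ∀ i, x i ≤ 1) (hxsum : ∑ i, x i = 1)
    (hy0 : ∀ i, 0 ≤ y i) (hy1 : ∀ i, y i ≤ 1) (hysum : ∑ i, y i = 1)
    (hxy : BayesLE x y) :
    LambdaMap a x ≤ LambdaMap a y := by
  obtain ⟨σ, hxa, hya, hc⟩ := hxy
  have hc0 := hc 0
  have h01 : ((0 : Fin (n + 1)).castSucc : Fin (n + 2)) = 0 := rfl
  have h11 : ((0 : Fin (n + 1)).succ : Fin (n + 2)) = 1 := rfl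
  rw [h01, h11] at hc0
  obtain ⟨hxpos, hxpure⟩ := sorted_facts x σ hxa hx0 hxsum
  obtain ⟨hypos, hypure⟩ := sorted_facts y σ hya hy0 hysum
  by_cases hy : ∃ i, y i = 1
  · simp [LambdaMap, hy]
  · -- y is not pure, hence x is not pure
    have hy1pos : 0 < y (σ 1) := by
      rcases lt_or_eq_of_le (hy0 (σ 1)) with h | h
      · exact h
      · exact absurd ⟨σ 0, hypure h.symm⟩ hy
    have hx : ¬∃ i, x i = 1 := by
      rintro ⟨i, hi⟩
      -- x (σ 0) = 1 and x (σ 1) = 0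
      have hmax : x (σ 0) = 1 := by
        have : x i ≤ x (σ 0) := by
          have := hxa (Fin.zero_le (σ.symm i))
          simpa [Function.comp] using this
        linarith [hx1 (σ 0), hi ▸ this]
      have hx1z : x (σ 1) = 0 := by
        have hs : ∑ j, x (σ j) = 1 := by rw [Equiv.sum_comp σ x]; exact hxsum
        rw [Fin.sum_univ_succ] at hs
        have h0 : x (σ (0 : Fin (n + 2))) = 1 := hmax
        have hsum0 : ∑ j : Fin (n + 1), x (σ j.succ) = 0 := by
          have : (σ (0 : Fin (n + 2))) = σ ((0 : Fin (n+1)).castSucc) := rfl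
          linarith [hs]
        have := (Finset.sum_eq_zero_iff_of_nonneg (by intro j _; exact hx0 _)).mp hsum0
          (0 : Fin (n + 1)) (Finset.mem_univ _)
        simpa using this
      -- cross inequality forces y (σ 1) ≤ 0, contradiction
      rw [hmax, hx1z] at hc0
      simp at hc0
      linarith
    have hx1pos : 0 < x (σ 1) := by
      rcases lt_or_eq_of_le (hx0 (σ 1)) with h | h
      · exact h
      · exact absurd ⟨σ 0, hxpure h.symm⟩ hx
    -- rewrite LambdaMap using σ
    have hxeq0 := comp_eq_sortNeg x σ hxa ⟨0, by omega⟩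
    have hxeq1 := comp_eq_sortNeg x σ hxa ⟨1, by omega⟩
    have hyeq0 := comp_eq_sortNeg y σ hya ⟨0, by omega⟩
    have hyeq1 := comp_eq_sortNeg y σ hya ⟨1, by omega⟩
    have ha' : 0 < a ⟨n + 1, by omega⟩ - a ⟨n, by omega⟩ := by
      have : (⟨n, by omega⟩ : Fin (n + 2)) < ⟨n + 1, by omega⟩ := by
        simp [Fin.lt_def]
      linarith [ha this]
    rw [LambdaMap, LambdaMap, if_neg hx, if_neg hy]
    simp only [← hxeq0, ← hxeq1, ← hyeq0, ← hyeq1]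
    have hdiv : x (σ ⟨0, by omega⟩) / x (σ ⟨1, by omega⟩)
        ≤ y (σ ⟨0, by omega⟩) / y (σ ⟨1, by omega⟩) := by
      have e0 : (⟨0, by omega⟩ : Fin (n + 2)) = 0 := rfl
      have e1 : (⟨1, by omega⟩ : Fin (n + 2)) = 1 := rfl
      rw [e0, e1, div_le_div_iff₀ hx1pos hy1pos]
      linarith [hc0]
    have hlog : Real.log (x (σ ⟨0, by omega⟩) / x (σ ⟨1, by omega⟩))
        ≤ Real.log (y (σ ⟨0, by omega⟩) / y (σ ⟨1, by omega⟩)) := by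
      apply Real.log_le_log _ hdiv
      exact div_pos hxpos hx1pos
    exact EReal.coe_le_coe_iff.mpr (by gcongr)
end
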